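/- Let α > 2 and R > 0, and let F : ℂ⁴ → ℝ be of class C² (in the real sense) with ∇F(0) = 0, D²F(0) = 0, and |D²F(φ)| ≤ |φ|^{α−2} for all φ with |φ| ≥ R. Then for every ε > 0 there exists δ_ε > 0 such that |∇F(φ+ψ) − ∇F(φ)| ≤ (ε + δ_ε(|φ|^{α−2} + |ψ|^{α−2}))|ψ| for all φ, ψ ∈ ℂ⁴. -/

import Mathlib

/-!
Since `∇F(φ)` is the Riesz representative of `dF(φ)`, we have
`|∇F(φ+ψ) − ∇F(φ)| ≤ ‖dF(φ+ψ) − dF(φ)‖`, and the mean value inequality bounds the latter by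
`|ψ|` times the supremum of `|D²F|` over the ball of radius `|φ| + |ψ|`. Continuity of `D²F`
and `D²F(0) = 0` make `|D²F|` smaller than `ε` near the origin, compactness bounds it up to
radius `R`, and the growth hypothesis takes over beyond, so `|D²F(x)| ≤ ε + δ|x|^(α−2)`
everywhere. Finally `(a + b)^p ≤ 2^p (a^p + b^p)`.
-/

open Real Metric

lemma Real.add_rpow_le_two_rpow_mul_rpow_add_rpow {a b p : ℝ} (ha : 0 ≤ a) (hb : 0 ≤ b)
    (hp : 0 ≤ p) : (a + b) ^ p ≤ 2 ^ p * (a ^ p + b ^ p) := calc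
  (a + b) ^ p ≤ (2 * max a b) ^ p := by
    rw [two_mul]; gcongr <;> [exact le_max_left a b; exact le_max_right a b]
  _ = 2 ^ p * max a b ^ p := mul_rpow zero_le_two (le_max_of_le_left ha)
  _ = 2 ^ p * max (a ^ p) (b ^ p) := by rw [rpow_max ha hb hp]
  _ ≤ 2 ^ p * (a ^ p + b ^ p) := by
    gcongr; exact max_le_add_of_nonneg (rpow_nonneg ha p) (rpow_nonneg hb p)

theorem norm_le_opNorm_of_apply_eq_re_inner {𝕜 E : Type*} [RCLike 𝕜] [NormedAddCommGroup E]
    [InnerProductSpace 𝕜 E] [NormedSpace ℝ E] (L : E →L[ℝ] ℝ) (u : E)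
    (hL : ∀ h, L h = RCLike.re (inner 𝕜 u h)) : ‖u‖ ≤ ‖L‖ := by
  have : ‖u‖ ^ 2 ≤ ‖L‖ * ‖u‖ := calc
    ‖u‖ ^ 2 = L u := by rw [hL, inner_self_eq_norm_sq]
    _ ≤ |L u| := le_abs_self _
    _ ≤ ‖L‖ * ‖u‖ := L.le_opNorm u
  nlinarith [norm_nonneg u, norm_nonneg L]

theorem exists_le_add_mul_rpow_of_continuous {E : Type*} [NormedAddCommGroup E] [ProperSpace E]
    {f : E → ℝ} (hf : Continuous f) (hf0 : f 0 = 0) {p R : ℝ} (hp : 0 ≤ p)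
    (hfR : ∀ x, R ≤ ‖x‖ → f x ≤ ‖x‖ ^ p) {ε : ℝ} (hε : 0 < ε) :
    ∃ δ > 0, ∀ x, f x ≤ ε + δ * ‖x‖ ^ p := by
  obtain ⟨r, hr, hsmall⟩ := Metric.eventually_nhds_iff.mp <|
    (hf.continuousAt (x := 0)).eventually_lt (continuousAt_const (y := ε)) (by rwa [hf0])
  obtain ⟨M, hM⟩ := (isCompact_closedBall (0 : E) R).exists_bound_of_continuousOn hf.continuousOn
  set δ := max 1 (M / r ^ p)
  refine ⟨δ, lt_max_of_lt_left one_pos, fun x => ?_⟩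
  have hxp : 0 ≤ ‖x‖ ^ p := rpow_nonneg (norm_nonneg x) p
  have hδx : ‖x‖ ^ p ≤ δ * ‖x‖ ^ p := le_mul_of_one_le_left hxp (le_max_left _ _)
  rcases lt_or_ge ‖x‖ r with hxr | hxr
  · linarith [hsmall (by rwa [dist_zero_right] : dist x 0 < r)]
  rcases le_or_gt ‖x‖ R with hxR | hxR
  · have hrp : 0 < r ^ p := rpow_pos_of_pos hr p
    calc f x ≤ M := (le_abs_self _).trans (hM x (by rwa [mem_closedBall, dist_zero_right]))
      _ = M / r ^ p * r ^ p := (div_mul_cancel₀ M hrp.ne').symm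
      _ ≤ δ * ‖x‖ ^ p := by
        gcongr
        exact le_max_right _ _
      _ ≤ ε + δ * ‖x‖ ^ p := le_add_of_nonneg_left hε.le
  · linarith [hfR x hxR.le]

theorem norm_fderiv_add_sub_fderiv_le {E F : Type*} [NormedAddCommGroup E] [NormedSpace ℝ E]
    [NormedAddCommGroup F] [NormedSpace ℝ F] {f : E → F} (hf : ContDiff ℝ 2 f) {x y : E} {C : ℝ}
    (hC : ∀ z, ‖z‖ ≤ ‖x‖ + ‖y‖ → ‖iteratedFDeriv ℝ 2 f z‖ ≤ C) :
    ‖fderiv ℝ f (x + y) - fderiv ℝ f x‖ ≤ C * ‖y‖ := by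
  have hdiff : Differentiable ℝ (fderiv ℝ f) :=
    (hf.fderiv_right (m := 1) le_rfl).differentiable one_ne_zero
  have hball : ∀ z ∈ closedBall (0 : E) (‖x‖ + ‖y‖), ‖fderiv ℝ (fderiv ℝ f) z‖ ≤ C := by
    intro z hz
    rw [← norm_iteratedFDeriv_one, norm_iteratedFDeriv_fderiv]
    exact hC z (by rwa [mem_closedBall, dist_zero_right] at hz)
  have hx : x ∈ closedBall (0 : E) (‖x‖ + ‖y‖) := by simp
  have hxy : x + y ∈ closedBall (0 : E) (‖x‖ + ‖y‖) := by simpa using norm_add_le x y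
  simpa using (convex_closedBall _ _).norm_image_sub_le_of_norm_fderiv_le
    (fun z _ => hdiff z) hball hx hxy

theorem statement2_general (α R : ℝ) (hα : 2 < α)
    (F : EuclideanSpace ℂ (Fin 4) → ℝ) (hF : ContDiff ℝ 2 F)
    (gradF : EuclideanSpace ℂ (Fin 4) → EuclideanSpace ℂ (Fin 4))
    (hgrad : ∀ φ h : EuclideanSpace ℂ (Fin 4),
      fderiv ℝ F φ h = (inner ℂ (gradF φ) h : ℂ).re)
    (hD2F0 : iteratedFDeriv ℝ 2 F 0 = 0)
    (hD2F : ∀ φ : EuclideanSpace ℂ (Fin 4), R ≤ ‖φ‖ →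
      ‖iteratedFDeriv ℝ 2 F φ‖ ≤ ‖φ‖ ^ (α - 2)) :
    ∀ ε > 0, ∃ δε > 0, ∀ φ ψ : EuclideanSpace ℂ (Fin 4),
      ‖gradF (φ + ψ) - gradF φ‖ ≤ (ε + δε * (‖φ‖ ^ (α - 2) + ‖ψ‖ ^ (α - 2))) * ‖ψ‖ := by
  intro ε hε
  have hp : 0 ≤ α - 2 := by linarith
  obtain ⟨δ, hδ, hbound⟩ := exists_le_add_mul_rpow_of_continuous
    (hF.continuous_iteratedFDeriv le_rfl).norm (by simp [hD2F0]) hp hD2F hε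
  refine ⟨δ * 2 ^ (α - 2), by positivity, fun φ ψ => ?_⟩
  calc ‖gradF (φ + ψ) - gradF φ‖ ≤ ‖fderiv ℝ F (φ + ψ) - fderiv ℝ F φ‖ :=
        norm_le_opNorm_of_apply_eq_re_inner (𝕜 := ℂ) _ _ fun h => by
          simp [hgrad, inner_sub_left]
    _ ≤ (ε + δ * (‖φ‖ + ‖ψ‖) ^ (α - 2)) * ‖ψ‖ :=
        norm_fderiv_add_sub_fderiv_le hF fun z hz => (hbound z).trans (by gcongr)
    _ ≤ (ε + δ * 2 ^ (α - 2) * (‖φ‖ ^ (α - 2) + ‖ψ‖ ^ (α - 2))) * ‖ψ‖ := by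
        rw [mul_assoc δ]
        gcongr
        exact add_rpow_le_two_rpow_mul_rpow_add_rpow (norm_nonneg φ) (norm_nonneg ψ) hp

/-- Under (H1)-(H2), for every `ε > 0` there is `δ_ε > 0` with
`|∇F(φ+ψ) − ∇F(φ)| ≤ (ε + δ_ε(|φ|^(α−2) + |ψ|^(α−2)))|ψ|` for all `φ, ψ`. -/
theorem statement2 (α R : ℝ) (hα : 2 < α) (hR : 0 < R)
    (F : EuclideanSpace ℂ (Fin 4) → ℝ) (hF : ContDiff ℝ 2 F)
    (gradF : EuclideanSpace ℂ (Fin 4) → EuclideanSpace ℂ (Fin 4))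
    (hgrad : ∀ φ h : EuclideanSpace ℂ (Fin 4),
      fderiv ℝ F φ h = (inner ℂ (gradF φ) h : ℂ).re)
    (hgrad0 : gradF 0 = 0)
    (hD2F0 : iteratedFDeriv ℝ 2 F 0 = 0)
    (hD2F : ∀ φ : EuclideanSpace ℂ (Fin 4), R ≤ ‖φ‖ →
      ‖iteratedFDeriv ℝ 2 F φ‖ ≤ ‖φ‖ ^ (α - 2)) :
    ∀ ε > 0, ∃ δε > 0, ∀ φ ψ : EuclideanSpace ℂ (Fin 4),
      ‖gradF (φ + ψ) - gradF φ‖ ≤ (ε + δε * (‖φ‖ ^ (α - 2) + ‖ψ‖ ^ (α - 2))) * ‖ψ‖ :=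
  statement2_general α R hα F hF gradF hgrad hD2F0 hD2F
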